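/- Let n ∈ ℕ, a ∈ C¹([0,1]) with a > 0, and f ∈ C¹([0,∞)) satisfy (f_eq), (f_sgn) and (f_ap), with ū > u0 as in (f_ap). Then the angular variable of the solution u_{ū} of the Cauchy problem with initial datum d = ū satisfies θ_{ū}(1) − θ_{ū}(0) < π. -/

import Mathlib

open Set MeasureTheory Filter Topology

noncomputable section

/-- `φ(s) = s / √(1+s²)`. -/
def phi (s : ℝ) : ℝ := s / Real.sqrt (1 + s ^ 2)

/-- `φ'(s) = (1+s²)^(-3/2)`. -/
def phiD (s : ℝ) : ℝ := 1 / (Real.sqrt (1 + s ^ 2)) ^ 3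

/-- the inverse of `φ`, a bijection of `(-1,1)` onto `ℝ`. -/
def phiInv (y : ℝ) : ℝ := y / Real.sqrt (1 - y ^ 2)

/-- the approximation `φₙ`: equal to `φ` on `[-n,n]`, affine outside. -/
def phiN (n : ℕ) (s : ℝ) : ℝ :=
  if (n : ℝ) < s then phi n + phiD n * (s - n)
  else if s < -(n : ℝ) then -phi n + phiD n * (s + n)
  else phi s

/-- `Φ(s) = √(1+s²) - 1`. -/
def PhiBig (s : ℝ) : ℝ := Real.sqrt (1 + s ^ 2) - 1

/-- `Φₙ(s) = ∫₀ˢ φₙ`. -/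
def PhiNBig (n : ℕ) (s : ℝ) : ℝ := ∫ t in (0:ℝ)..s, phiN n t

/-- the extension `f̂` of `f` vanishing on the negatives. -/
def fhat (f : ℝ → ℝ) (s : ℝ) : ℝ := if s < 0 then 0 else f s

/-- `F(s) = ∫_{u0}^s f`. -/
def Fprim (f : ℝ → ℝ) (u0 s : ℝ) : ℝ := ∫ t in u0..s, f t

/-- assumption `(f_eq)`. -/
def Feq (f : ℝ → ℝ) (u0 : ℝ) : Prop := f 0 = 0 ∧ f u0 = 0

/-- assumption `(f_sgn)`. -/
def Fsgn (f : ℝ → ℝ) (u0 : ℝ) : Prop :=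
  (∀ s, 0 < s → s < u0 → f s < 0) ∧ (∀ s, u0 < s → 0 < f s)

/-- the constant `C_a`. -/
def Ca (a : ℝ → ℝ) : ℝ :=
  max ((a 1 / a 0) * Real.exp (∫ x in (0:ℝ)..1, max (-deriv a x) 0 / a x))
      ((a 0 / a 1) * Real.exp (∫ x in (0:ℝ)..1, max (deriv a x) 0 / a x))

/-- assumption `(f_ap)`, with the value `ū` made explicit. -/
def Fap (a f : ℝ → ℝ) (u0 ubar : ℝ) : Prop :=
  u0 < ubar ∧ (∫ s in u0..ubar, f s) = Ca a * ∫ s in u0..(0:ℝ), f s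

/-- assumption `(f_ap)'`. -/
def Fap' (a f : ℝ → ℝ) : Prop :=
  (∫ x in (0:ℝ)..1, a x) * sSup ((fun s => max (-f s) 0) '' Ici 0) < 1

/-- classical solution of the approximated Neumann problem `(Pₙ)`. -/
def IsPnSol (a f : ℝ → ℝ) (n : ℕ) (u : ℝ → ℝ) : Prop :=
  ContDiff ℝ 2 u ∧ (∀ x ∈ Ioo (0:ℝ) 1, 0 < u x) ∧
  deriv u 0 = 0 ∧ deriv u 1 = 0 ∧
  ∀ x ∈ Ioo (0:ℝ) 1, -deriv (fun y => phiN n (deriv u y)) x = a x * f (u x)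

/-- classical solution of the prescribed mean curvature Neumann problem `(P)`. -/
def IsPSol (a f : ℝ → ℝ) (u : ℝ → ℝ) : Prop :=
  ContDiff ℝ 2 u ∧ (∀ x ∈ Ioo (0:ℝ) 1, 0 < u x) ∧
  deriv u 0 = 0 ∧ deriv u 1 = 0 ∧
  ∀ x ∈ Ioo (0:ℝ) 1, -deriv (fun y => phi (deriv u y)) x = a x * f (u x)

/-- solution of the Cauchy problem with initial datum `d`. -/
def IsCauchySol (a f : ℝ → ℝ) (n : ℕ) (d : ℝ) (u : ℝ → ℝ) : Prop :=
  ContDiff ℝ 2 u ∧ u 0 = d ∧ deriv u 0 = 0 ∧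
  ∀ x ∈ Ioo (0:ℝ) 1, -deriv (fun y => phiN n (deriv u y)) x = a x * fhat f (u x)

/-- `θ` is a (clockwise) angular variable for `(u - u0, φₙ(u'))` around `(u0,0)`. -/
def IsAngle (n : ℕ) (u0 : ℝ) (u θ : ℝ → ℝ) : Prop :=
  ContinuousOn θ (Icc 0 1) ∧
  ∀ x ∈ Icc (0:ℝ) 1,
    u x - u0 = Real.sqrt ((u x - u0) ^ 2 + phiN n (deriv u x) ^ 2) * Real.cos (θ x) ∧
    phiN n (deriv u x) = -(Real.sqrt ((u x - u0) ^ 2 + phiN n (deriv u x) ^ 2) * Real.sin (θ x))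

/-- non-constant on `(0,1)`. -/
def Nonconstant (u : ℝ → ℝ) : Prop := ∃ x ∈ Ioo (0:ℝ) 1, ∃ y ∈ Ioo (0:ℝ) 1, u x ≠ u y

/-- the set of points of `(0,1)` where `u` takes the value `u0`. -/
def zeroSet (u : ℝ → ℝ) (u0 : ℝ) : Set ℝ := {x | x ∈ Ioo (0:ℝ) 1 ∧ u x = u0}

/-- the hypothesis `f'(u0) > λ_{k+1}`: there is `λ̄ < f'(u0)` admitting a nontrivial Neumann
eigenfunction of `-w'' = λ̄ a w` with exactly `k` zeros in `(0,1)`. -/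
def EigenHyp (a f : ℝ → ℝ) (u0 : ℝ) (k : ℕ) : Prop :=
  ∃ lam : ℝ, ∃ w : ℝ → ℝ, lam < deriv f u0 ∧ ContDiff ℝ 2 w ∧
    (∃ x ∈ Icc (0:ℝ) 1, w x ≠ 0) ∧
    (∀ x ∈ Ioo (0:ℝ) 1, -deriv (deriv w) x = lam * a x * w x) ∧
    deriv w 0 = 0 ∧ deriv w 1 = 0 ∧ (zeroSet w 0).ncard = k

/-- the functional `J(v) = ∫₀¹ √(1+|Dv|²)`. -/
def Jfun (v : ℝ → ℝ) : ℝ :=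
  sSup { r : ℝ | ∃ w₁ w₂ : ℝ → ℝ, ContDiff ℝ 1 w₁ ∧ ContDiff ℝ 1 w₂ ∧
    tsupport w₁ ⊆ Ioo 0 1 ∧ tsupport w₂ ⊆ Ioo 0 1 ∧
    (∀ x, w₁ x ^ 2 + w₂ x ^ 2 ≤ 1) ∧
    r = ∫ x in Ioo (0:ℝ) 1, (v x * deriv w₁ x + w₂ x) }

/-- BV-solution of the Neumann problem `(P)`. -/
def IsBVSol (a f : ℝ → ℝ) (u : ℝ → ℝ) : Prop :=
  BoundedVariationOn u (Ioo 0 1) ∧ (∀ x ∈ Ioo (0:ℝ) 1, 0 ≤ u x) ∧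
  ∀ v : ℝ → ℝ, BoundedVariationOn v (Ioo 0 1) →
    Jfun u + ∫ x in Ioo (0:ℝ) 1, a x * f (u x) * (v x - u x) ≤ Jfun v

/-- `u - u0` changes sign at `z`. -/
def ChangesSign (u : ℝ → ℝ) (u0 z : ℝ) : Prop :=
  ∃ δ > (0:ℝ), ((∀ x ∈ Ioo (z - δ) z, u x < u0) ∧ (∀ x ∈ Ioo z (z + δ), u0 < u x)) ∨
           ((∀ x ∈ Ioo (z - δ) z, u0 < u x) ∧ (∀ x ∈ Ioo z (z + δ), u x < u0))

/-- the energy `Eₙ` along a solution of `(Pₙ)`. -/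
def EnergyN (a f : ℝ → ℝ) (u0 : ℝ) (n : ℕ) (u : ℝ → ℝ) (x : ℝ) : ℝ :=
  deriv u x * phiN n (deriv u x) - PhiNBig n (deriv u x) + a x * Fprim f u0 (u x)

/-- the energy `ℰ` of `u` extends to a continuous function on `[0,1]`. -/
def HasContinuousEnergy (a f : ℝ → ℝ) (u0 : ℝ) (u : ℝ → ℝ) : Prop :=
  ∃ E : ℝ → ℝ, ContinuousOn E (Icc 0 1) ∧
    ∀ x ∈ Ioo (0:ℝ) 1, ContinuousAt u x →
      (DifferentiableAt ℝ u x →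
        E x = 1 - 1 / Real.sqrt (1 + deriv u x ^ 2) + a x * Fprim f u0 (u x)) ∧
      (¬ DifferentiableAt ℝ u x → E x = 1 + a x * Fprim f u0 (u x))

/-- the oscillatory structure of the BV-solutions of Theorem 1.1: `m` generalized
intersections with `u0`, with starting sign `σ` (`σ = 1` for case (I), `σ = -1` for case (II)). -/
def OscStructure (u0 : ℝ) (u : ℝ → ℝ) (m : ℕ) (σ : ℝ) : Prop :=
  ∃ x : ℕ → ℝ,
    x 0 = 0 ∧ x (m + 1) = 1 ∧ (∀ i ≤ m, x i < x (i + 1)) ∧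
    ContDiffOn ℝ 2 u (Ico 0 (x 1)) ∧ ContDiffOn ℝ 2 u (Ioc (x m) 1) ∧
    (∀ i, 1 ≤ i → i + 1 ≤ m → ContDiffOn ℝ 2 u (Ioo (x i) (x (i + 1)))) ∧
    derivWithin u (Icc 0 1) 0 = 0 ∧ derivWithin u (Icc 0 1) 1 = 0 ∧
    (∀ i ≤ m, ∀ y ∈ Ioo (x i) (x (i + 1)), 0 < σ * (-1 : ℝ) ^ (i + 1) * (u y - u0)) ∧
    ∀ i, 1 ≤ i → i ≤ m →
      (u (x i) = u0 ∧ ContDiffOn ℝ 2 u (Ioo (x (i - 1)) (x (i + 1)))) ∨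
      (∃ L R : ℝ, Tendsto u (𝓝[<] x i) (𝓝 L) ∧ Tendsto u (𝓝[>] x i) (𝓝 R) ∧
        (0 < σ * (-1 : ℝ) ^ (i + 1) →
          L ≤ u0 ∧ u0 ≤ R ∧ Tendsto (deriv u) (𝓝[<] x i) atTop ∧
            Tendsto (deriv u) (𝓝[>] x i) atTop) ∧
        (σ * (-1 : ℝ) ^ (i + 1) < 0 →
          R ≤ u0 ∧ u0 ≤ L ∧ Tendsto (deriv u) (𝓝[<] x i) atBot ∧
            Tendsto (deriv u) (𝓝[>] x i) atBot))
lemma sq1_pos (s : ℝ) : (0:ℝ) < 1 + s ^ 2 := by positivity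

lemma sqrt1_pos (s : ℝ) : 0 < Real.sqrt (1 + s ^ 2) := Real.sqrt_pos.2 (sq1_pos s)

lemma phiD_pos (s : ℝ) : 0 < phiD s := by
  have := sqrt1_pos s; unfold phiD; positivity

lemma phi_hasDerivAt (s : ℝ) : HasDerivAt phi (phiD s) s := by
  have h1 : HasDerivAt (fun x : ℝ => 1 + x ^ 2) (2 * s) s := by
    simpa using ((hasDerivAt_pow 2 s).const_add 1)
  have h2 : HasDerivAt (fun x : ℝ => Real.sqrt (1 + x ^ 2)) (1 / (2 * Real.sqrt (1 + s ^ 2)) * (2 * s)) s :=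
    (Real.hasDerivAt_sqrt (ne_of_gt (sq1_pos s))).comp s h1
  have h3 : HasDerivAt phi ((1 * Real.sqrt (1 + s ^ 2) - s * (1 / (2 * Real.sqrt (1 + s ^ 2)) * (2 * s))) / (Real.sqrt (1 + s ^ 2)) ^ 2) s :=
    (hasDerivAt_id s).div h2 (ne_of_gt (sqrt1_pos s))
  convert h3 using 1
  have hs := sqrt1_pos s
  have hsq : Real.sqrt (1 + s ^ 2) ^ 2 = 1 + s ^ 2 := Real.sq_sqrt (le_of_lt (sq1_pos s))
  have hcube : Real.sqrt (1 + s ^ 2) ^ 3 = (1 + s ^ 2) * Real.sqrt (1 + s ^ 2) := by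
    rw [pow_succ, hsq]
  unfold phiD
  rw [hcube, hsq]
  field_simp
  nlinarith [hsq, hs]

lemma phi_zero : phi 0 = 0 := by simp [phi]

lemma phi_neg (s : ℝ) : phi (-s) = - phi s := by simp [phi, neg_div]
lemma phiD_neg (s : ℝ) : phiD (-s) = phiD s := by simp [phiD]

def clampN (n : ℕ) (s : ℝ) : ℝ := max (-(n:ℝ)) (min s n)
def phiND (n : ℕ) (s : ℝ) : ℝ := phiD (clampN n s)

lemma phiND_pos (n : ℕ) (s : ℝ) : 0 < phiND n s := phiD_pos _

lemma phiN_eq_phi_of_mem (n : ℕ) {s : ℝ} (h1 : -(n:ℝ) ≤ s) (h2 : s ≤ n) : phiN n s = phi s := by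
  unfold phiN
  rw [if_neg (not_lt.2 h2), if_neg (not_lt.2 h1)]

lemma phiN_zero_fun : phiN 0 = fun s => s := by
  funext s
  unfold phiN
  have h0 : phi 0 = 0 := phi_zero
  have hD : phiD 0 = 1 := by simp [phiD]
  rcases lt_trichotomy s 0 with h | h | h
  · rw [if_neg (by push_cast; linarith), if_pos (by push_cast; linarith)]
    push_cast; rw [h0, hD]; ring
  · subst h; rw [if_neg (by norm_num), if_neg (by norm_num)]; simpa using h0
  · rw [if_pos (by push_cast; linarith)]
    push_cast; rw [h0, hD]; ring

lemma phiN_hasDerivAt (n : ℕ) (s : ℝ) : HasDerivAt (phiN n) (phiND n s) s := by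
  rcases Nat.eq_zero_or_pos n with hn | hn
  · subst hn
    have : phiND 0 s = 1 := by
      have : clampN 0 s = 0 := by
        unfold clampN; push_cast; rw [neg_zero]
        rcases le_total s 0 with h | h
        · rw [min_eq_left h, max_eq_left h]
        · rw [min_eq_right h]; simp
      rw [phiND, this]; simp [phiD]
    rw [this, phiN_zero_fun]
    exact hasDerivAt_id s
  have hn1 : (1:ℝ) ≤ (n:ℝ) := by exact_mod_cast hn
  have haffR : ∀ c d : ℝ, HasDerivAt (fun t : ℝ => c + phiD (n:ℝ) * (t - d)) (phiD (n:ℝ)) s := by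
    intro c d
    simpa using (((hasDerivAt_id s).sub_const d).const_mul (phiD (n:ℝ))).const_add c
  rcases lt_trichotomy s (-(n:ℝ)) with hs | hs | hs
  · -- s < -n : affine piece
    have hev : (fun t : ℝ => -phi n + phiD n * (t + n)) =ᶠ[𝓝 s] phiN n := by
      have : ∀ᶠ t in 𝓝 s, t < -(n:ℝ) := eventually_lt_nhds hs
      filter_upwards [this] with t ht
      unfold phiN
      rw [if_neg (by linarith), if_pos ht]
    have hcl : clampN n s = -(n:ℝ) := by
      unfold clampN; rw [min_eq_left (by linarith), max_eq_left (by linarith)]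
    have : HasDerivAt (fun t : ℝ => -phi n + phiD n * (t - (-(n:ℝ)))) (phiD (n:ℝ)) s := haffR _ _
    have h2 : HasDerivAt (fun t : ℝ => -phi n + phiD n * (t + n)) (phiD (n:ℝ)) s := by
      simpa [sub_neg_eq_add] using this
    have := h2.congr_of_eventuallyEq hev.symm
    rw [phiND, hcl, phiD_neg]; exact this
  · -- s = -n : glue
    subst hs
    have hval : phiN n (-(n:ℝ)) = phi (-(n:ℝ)) := phiN_eq_phi_of_mem n le_rfl (by linarith)
    -- left part : affine on Iic (-n)
    have hleft : HasDerivWithinAt (phiN n) (phiD (n:ℝ)) (Iic (-(n:ℝ))) (-(n:ℝ)) := by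
      have h2 : HasDerivAt (fun t : ℝ => -phi n + phiD n * (t + n)) (phiD (n:ℝ)) (-(n:ℝ)) := by
        simpa [sub_neg_eq_add] using haffR (-phi n) (-(n:ℝ))
      refine (h2.hasDerivWithinAt).congr ?_ ?_
      · intro t ht
        rcases eq_or_lt_of_le (mem_Iic.1 ht) with h | h
        · rw [h, hval, phi_neg]; ring
        · unfold phiN; rw [if_neg (by linarith), if_pos h]
      · rw [hval, phi_neg]; ring
    -- right part : phi on Ici (-n)
    have hright : HasDerivWithinAt (phiN n) (phiD (n:ℝ)) (Ici (-(n:ℝ))) (-(n:ℝ)) := by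
      have h2 : HasDerivWithinAt phi (phiD (-(n:ℝ))) (Ici (-(n:ℝ))) (-(n:ℝ)) :=
        (phi_hasDerivAt _).hasDerivWithinAt
      rw [phiD_neg] at h2
      have hev : phiN n =ᶠ[𝓝[Ici (-(n:ℝ))] (-(n:ℝ))] phi := by
        have h1 : ∀ᶠ t in 𝓝 (-(n:ℝ)), t < -(n:ℝ) + 1 := eventually_lt_nhds (by linarith)
        filter_upwards [eventually_nhdsWithin_of_eventually_nhds h1, self_mem_nhdsWithin]
          with t h1t h2t
        exact phiN_eq_phi_of_mem n h2t (by linarith)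
      exact h2.congr_of_eventuallyEq hev hval
    have := hleft.union hright
    rw [Iic_union_Ici, hasDerivWithinAt_univ] at this
    have hcl : clampN n (-(n:ℝ)) = -(n:ℝ) := by
      unfold clampN; rw [min_eq_left (by linarith), max_eq_left le_rfl]
    rw [phiND, hcl, phiD_neg]; exact this
  rcases lt_trichotomy s (n:ℝ) with hs2 | hs2 | hs2
  · -- -n < s < n
    have hev : phi =ᶠ[𝓝 s] phiN n := by
      have : ∀ᶠ t in 𝓝 s, t ∈ Ioo (-(n:ℝ)) (n:ℝ) := Ioo_mem_nhds hs hs2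
      filter_upwards [this] with t ht
      exact (phiN_eq_phi_of_mem n (le_of_lt ht.1) (le_of_lt ht.2)).symm
    have hcl : clampN n s = s := by
      unfold clampN; rw [min_eq_left (le_of_lt hs2), max_eq_right (le_of_lt hs)]
    rw [phiND, hcl]
    exact (phi_hasDerivAt s).congr_of_eventuallyEq hev.symm
  · -- s = n : glue
    subst hs2
    have hval : phiN n (n:ℝ) = phi (n:ℝ) := phiN_eq_phi_of_mem n (by linarith) le_rfl
    have hleft : HasDerivWithinAt (phiN n) (phiD (n:ℝ)) (Iic (n:ℝ)) (n:ℝ) := by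
      have h2 : HasDerivWithinAt phi (phiD (n:ℝ)) (Iic (n:ℝ)) (n:ℝ) :=
        (phi_hasDerivAt _).hasDerivWithinAt
      have hev : phiN n =ᶠ[𝓝[Iic (n:ℝ)] (n:ℝ)] phi := by
        have h1 : ∀ᶠ t in 𝓝 (n:ℝ), (n:ℝ) - 1 < t := eventually_gt_nhds (by linarith)
        filter_upwards [eventually_nhdsWithin_of_eventually_nhds h1, self_mem_nhdsWithin]
          with t h1t h2t
        exact phiN_eq_phi_of_mem n (by linarith) h2t
      exact h2.congr_of_eventuallyEq hev hval
    have hright : HasDerivWithinAt (phiN n) (phiD (n:ℝ)) (Ici (n:ℝ)) (n:ℝ) := by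
      refine ((haffR (phi n) (n:ℝ)).hasDerivWithinAt).congr (fun t ht => ?_) (by rw [hval]; ring)
      rcases eq_or_lt_of_le (mem_Ici.1 ht) with h | h
      · rw [← h, hval]; ring
      · unfold phiN; rw [if_pos h]
    have := hleft.union hright
    rw [Iic_union_Ici, hasDerivWithinAt_univ] at this
    have hcl : clampN n (n:ℝ) = (n:ℝ) := by
      unfold clampN; rw [min_eq_right le_rfl, max_eq_right (by linarith)]
    rw [phiND, hcl]; exact this
  · -- s > n
    have hev : (fun t : ℝ => phi n + phiD n * (t - n)) =ᶠ[𝓝 s] phiN n := by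
      have : ∀ᶠ t in 𝓝 s, (n:ℝ) < t := eventually_gt_nhds hs2
      filter_upwards [this] with t ht
      unfold phiN; rw [if_pos ht]
    have hcl : clampN n s = (n:ℝ) := by
      unfold clampN; rw [min_eq_right (le_of_lt hs2), max_eq_right (by linarith)]
    rw [phiND, hcl]
    exact (haffR _ _).congr_of_eventuallyEq hev.symm



lemma phiN_differentiable (n : ℕ) : Differentiable ℝ (phiN n) :=
  fun s => (phiN_hasDerivAt n s).differentiableAt

lemma phiN_continuous (n : ℕ) : Continuous (phiN n) := (phiN_differentiable n).continuous

lemma phiN_deriv (n : ℕ) (s : ℝ) : deriv (phiN n) s = phiND n s := (phiN_hasDerivAt n s).deriv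

lemma phiN_strictMono (n : ℕ) : StrictMono (phiN n) :=
  strictMono_of_deriv_pos (fun s => by rw [phiN_deriv]; exact phiND_pos n s)

lemma phiN_mono (n : ℕ) : Monotone (phiN n) := (phiN_strictMono n).monotone

lemma phiN_zero_val (n : ℕ) : phiN n 0 = 0 := by
  rw [phiN_eq_phi_of_mem n (by simp) (by exact_mod_cast n.cast_nonneg)]
  exact phi_zero

lemma phiN_eq_zero_iff {n : ℕ} {s : ℝ} : phiN n s = 0 ↔ s = 0 := by
  constructor
  · intro h
    apply (phiN_strictMono n).injective
    rw [h, phiN_zero_val]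
  · rintro rfl; exact phiN_zero_val n

lemma phiN_intervalIntegrable (n : ℕ) (a b : ℝ) : IntervalIntegrable (phiN n) volume a b :=
  (phiN_continuous n).intervalIntegrable a b

lemma PhiNBig_hasDerivAt (n : ℕ) (s : ℝ) : HasDerivAt (PhiNBig n) (phiN n s) s :=
  intervalIntegral.integral_hasDerivAt_right (phiN_intervalIntegrable n 0 s)
    ((phiN_continuous n).stronglyMeasurableAtFilter _ _) (phiN_continuous n).continuousAt

lemma PhiNBig_zero (n : ℕ) : PhiNBig n 0 = 0 := intervalIntegral.integral_same

def Psi (n : ℕ) (s : ℝ) : ℝ := s * phiN n s - PhiNBig n s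

lemma Psi_zero (n : ℕ) : Psi n 0 = 0 := by simp [Psi, PhiNBig_zero]

lemma Psi_hasDerivAt (n : ℕ) (s : ℝ) : HasDerivAt (Psi n) (s * phiND n s) s := by
  have h1 : HasDerivAt (fun t => t * phiN n t) (1 * phiN n s + s * phiND n s) s :=
    (hasDerivAt_id s).mul (phiN_hasDerivAt n s)
  have := h1.sub (PhiNBig_hasDerivAt n s)
  refine this.congr_deriv ?_
  ring

lemma Psi_differentiable (n : ℕ) : Differentiable ℝ (Psi n) :=
  fun s => (Psi_hasDerivAt n s).differentiableAt

lemma Psi_continuous (n : ℕ) : Continuous (Psi n) := (Psi_differentiable n).continuous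

lemma Psi_nonneg (n : ℕ) (s : ℝ) : 0 ≤ Psi n s := by
  rcases le_total 0 s with h | h
  · have h1 : Psi n s = ∫ t in (0:ℝ)..s, (phiN n s - phiN n t) := by
      rw [intervalIntegral.integral_sub (intervalIntegrable_const) (phiN_intervalIntegrable n 0 s)]
      simp [Psi, PhiNBig]
      try ring
    rw [h1]
    apply intervalIntegral.integral_nonneg h
    intro t ht
    have := phiN_mono n ht.2
    linarith
  · have h1 : Psi n s = ∫ t in s..(0:ℝ), (phiN n t - phiN n s) := by
      rw [intervalIntegral.integral_sub (phiN_intervalIntegrable n s 0) (intervalIntegrable_const)]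
      have : ∫ t in s..(0:ℝ), phiN n t = - PhiNBig n s := by
        rw [PhiNBig, ← intervalIntegral.integral_symm]
      rw [this]
      simp [Psi]
      ring
    rw [h1]
    apply intervalIntegral.integral_nonneg h
    intro t ht
    have := phiN_mono n ht.1
    linarith

lemma abs_le_sqrt_two_mul_abs_phiN (n : ℕ) {s : ℝ} (h : |s| ≤ 1) :
    |s| ≤ Real.sqrt 2 * |phiN n s| := by
  have h2 : (1:ℝ) ≤ Real.sqrt 2 := by
    rw [show (1:ℝ) = Real.sqrt 1 by simp]
    exact Real.sqrt_le_sqrt (by norm_num)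
  rcases Nat.eq_zero_or_pos n with hn | hn
  · subst hn
    rw [phiN_zero_fun]
    nlinarith [abs_nonneg s]
  · have hn1 : (1:ℝ) ≤ (n:ℝ) := by exact_mod_cast hn
    have habs : -(n:ℝ) ≤ s ∧ s ≤ (n:ℝ) := abs_le.1 (h.trans hn1)
    rw [phiN_eq_phi_of_mem n habs.1 habs.2]
    have hphi : |phi s| = |s| / Real.sqrt (1 + s ^ 2) := by
      rw [phi, abs_div, abs_of_pos (sqrt1_pos s)]
    rw [hphi]
    have hle : Real.sqrt (1 + s ^ 2) ≤ Real.sqrt 2 := by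
      apply Real.sqrt_le_sqrt
      nlinarith [sq_abs s, abs_nonneg s]
    rw [mul_div_assoc']
    rw [le_div_iff₀ (sqrt1_pos s)]
    calc |s| * Real.sqrt (1 + s ^ 2) ≤ |s| * Real.sqrt 2 :=
          mul_le_mul_of_nonneg_left hle (abs_nonneg s)
      _ = Real.sqrt 2 * |s| := mul_comm _ _

section Bpart

variable {f : ℝ → ℝ} {u0 : ℝ}

lemma fhat_eq_comp (hf0 : f 0 = 0) : fhat f = fun s => f (max s 0) := by
  funext s
  unfold fhat
  rcases lt_or_ge s 0 with h | h
  · rw [if_pos h, max_eq_right h.le, hf0]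
  · rw [if_neg (not_lt.2 h), max_eq_left h]

lemma fhat_continuous (hf : ContinuousOn f (Ici 0)) (hf0 : f 0 = 0) : Continuous (fhat f) := by
  rw [fhat_eq_comp hf0]
  exact hf.comp_continuous (continuous_id.max continuous_const) (fun s => le_max_right s 0)

lemma fhat_nonpos_on (hfeq : Feq f u0) (hfsgn : Fsgn f u0) {s : ℝ} (hs : s ≤ u0) :
    fhat f s ≤ 0 := by
  unfold fhat
  rcases lt_or_ge s 0 with h | h
  · rw [if_pos h]
  · rw [if_neg (not_lt.2 h)]
    rcases eq_or_lt_of_le h with h0 | h0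
    · rw [← h0, hfeq.1]
    rcases eq_or_lt_of_le hs with h1 | h1
    · rw [h1, hfeq.2]
    · exact (hfsgn.1 s h0 h1).le

lemma fhat_neg_on (hfsgn : Fsgn f u0) {s : ℝ} (h0 : 0 < s) (h1 : s < u0) : fhat f s < 0 := by
  unfold fhat
  rw [if_neg (not_lt.2 h0.le)]
  exact hfsgn.1 s h0 h1

lemma fhat_zero_of_nonpos {s : ℝ} (hf0 : f 0 = 0) (hs : s ≤ 0) : fhat f s = 0 := by
  unfold fhat
  rcases lt_or_ge s 0 with h | h
  · rw [if_pos h]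
  · rw [if_neg (not_lt.2 h), le_antisymm hs h, hf0]

/-- `F̂ s = ∫_{u0}^s f̂`. -/
def Fh (f : ℝ → ℝ) (u0 s : ℝ) : ℝ := ∫ t in u0..s, fhat f t

end Bpart


section Bpart2

variable {f : ℝ → ℝ} {u0 : ℝ}

lemma fhat_nonneg_on (hfeq : Feq f u0) (hfsgn : Fsgn f u0) (hu0 : 0 < u0) {s : ℝ}
    (hs : u0 ≤ s) : 0 ≤ fhat f s := by
  unfold fhat
  rw [if_neg (not_lt.2 (by linarith))]
  rcases eq_or_lt_of_le hs with h | h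
  · rw [← h, hfeq.2]
  · exact (hfsgn.2 s h).le

variable (hc : Continuous (fhat f))
include hc

lemma fhat_intervalIntegrable (a b : ℝ) : IntervalIntegrable (fhat f) volume a b :=
  hc.intervalIntegrable a b

lemma Fh_hasDerivAt (s : ℝ) : HasDerivAt (Fh f u0) (fhat f s) s :=
  intervalIntegral.integral_hasDerivAt_right (fhat_intervalIntegrable hc u0 s)
    (hc.stronglyMeasurableAtFilter _ _) hc.continuousAt

lemma Fh_differentiable : Differentiable ℝ (Fh f u0) :=
  fun s => (Fh_hasDerivAt hc s).differentiableAt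

lemma Fh_continuous : Continuous (Fh f u0) := (Fh_differentiable hc).continuous

lemma Fh_split (s : ℝ) : Fh f u0 s = Fh f u0 0 + ∫ t in (0:ℝ)..s, fhat f t := by
  rw [Fh, Fh, intervalIntegral.integral_add_adjacent_intervals
    (fhat_intervalIntegrable hc u0 0) (fhat_intervalIntegrable hc 0 s)]

lemma Fh_nonneg (hfeq : Feq f u0) (hfsgn : Fsgn f u0) (hu0 : 0 < u0) (s : ℝ) :
    0 ≤ Fh f u0 s := by
  rcases le_total u0 s with h | h
  · exact intervalIntegral.integral_nonneg h
      (fun t ht => fhat_nonneg_on hfeq hfsgn hu0 ht.1)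
  · rw [Fh, intervalIntegral.integral_symm]
    have h1 : 0 ≤ ∫ t in s..u0, (- fhat f t) := intervalIntegral.integral_nonneg h
      (fun t ht => by simpa using fhat_nonpos_on hfeq hfsgn ht.2)
    rw [intervalIntegral.integral_neg] at h1
    linarith

lemma Fh_zero_pos (hfeq : Feq f u0) (hfsgn : Fsgn f u0) (hu0 : 0 < u0) :
    0 < Fh f u0 0 := by
  have h1 : 0 < ∫ t in (0:ℝ)..u0, (- fhat f t) := by
    apply intervalIntegral.intervalIntegral_pos_of_pos_on
      ((hc.neg).intervalIntegrable 0 u0)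
    · intro t ht
      simpa using fhat_neg_on hfsgn ht.1 ht.2
    · exact hu0
  rw [intervalIntegral.integral_neg] at h1
  rw [Fh, intervalIntegral.integral_symm]
  linarith

lemma Fh_lt_of_pos (hfeq : Feq f u0) (hfsgn : Fsgn f u0) (hu0 : 0 < u0) {s : ℝ}
    (h0 : 0 < s) (h1 : s ≤ u0) : Fh f u0 s < Fh f u0 0 := by
  rw [Fh_split hc s]
  have h2 : 0 < ∫ t in (0:ℝ)..s, (- fhat f t) := by
    apply intervalIntegral.intervalIntegral_pos_of_pos_on ((hc.neg).intervalIntegrable 0 s)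
    · intro t ht
      simpa using fhat_neg_on hfsgn ht.1 (lt_of_lt_of_le ht.2 h1)
    · exact h0
  rw [intervalIntegral.integral_neg] at h2
  linarith

lemma Fh_eq_of_nonpos (hf0 : f 0 = 0) {s : ℝ} (hs : s ≤ 0) : Fh f u0 s = Fh f u0 0 := by
  rw [Fh_split hc s]
  have : ∫ t in (0:ℝ)..s, fhat f t = ∫ t in (0:ℝ)..s, (0:ℝ) := by
    apply intervalIntegral.integral_congr
    intro t ht
    rw [uIcc_of_ge hs] at ht
    exact fhat_zero_of_nonpos hf0 ht.2
  rw [this]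
  simp

lemma Fh_le (hfeq : Feq f u0) (hfsgn : Fsgn f u0) (hu0 : 0 < u0) {s : ℝ} (hs : s ≤ u0) :
    Fh f u0 s ≤ Fh f u0 0 := by
  rcases le_or_gt s 0 with h | h
  · exact le_of_eq (Fh_eq_of_nonpos hc hfeq.1 h)
  · exact (Fh_lt_of_pos hc hfeq hfsgn hu0 h hs).le

end Bpart2


section Cpart

variable {a : ℝ → ℝ} (ha : ContDiff ℝ 1 a) (hapos : ∀ x ∈ Icc (0:ℝ) 1, 0 < a x)

/-- `(a')⁺/a`. -/
def cpl (a : ℝ → ℝ) (x : ℝ) : ℝ := max (deriv a x) 0 / a x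
/-- `(a')⁻/a`. -/
def cmi (a : ℝ → ℝ) (x : ℝ) : ℝ := max (-deriv a x) 0 / a x
/-- `a'/a`. -/
def clog (a : ℝ → ℝ) (x : ℝ) : ℝ := deriv a x / a x

include ha hapos

lemma cpl_continuousOn : ContinuousOn (cpl a) (Icc 0 1) :=
  (((ha.continuous_deriv le_rfl).max continuous_const).continuousOn).div
    ha.continuous.continuousOn (fun x hx => (hapos x hx).ne')

lemma cmi_continuousOn : ContinuousOn (cmi a) (Icc 0 1) :=
  ((((ha.continuous_deriv le_rfl).neg).max continuous_const).continuousOn).div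
    ha.continuous.continuousOn (fun x hx => (hapos x hx).ne')

lemma clog_continuousOn : ContinuousOn (clog a) (Icc 0 1) :=
  ((ha.continuous_deriv le_rfl).continuousOn).div
    ha.continuous.continuousOn (fun x hx => (hapos x hx).ne')

lemma cpl_intervalIntegrable {x y : ℝ} (hx : x ∈ Icc (0:ℝ) 1) (hy : y ∈ Icc (0:ℝ) 1) :
    IntervalIntegrable (cpl a) volume x y :=
  ((cpl_continuousOn ha hapos).mono (uIcc_subset_Icc hx hy)).intervalIntegrable

lemma cmi_intervalIntegrable {x y : ℝ} (hx : x ∈ Icc (0:ℝ) 1) (hy : y ∈ Icc (0:ℝ) 1) :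
    IntervalIntegrable (cmi a) volume x y :=
  ((cmi_continuousOn ha hapos).mono (uIcc_subset_Icc hx hy)).intervalIntegrable

lemma clog_intervalIntegrable {x y : ℝ} (hx : x ∈ Icc (0:ℝ) 1) (hy : y ∈ Icc (0:ℝ) 1) :
    IntervalIntegrable (clog a) volume x y :=
  ((clog_continuousOn ha hapos).mono (uIcc_subset_Icc hx hy)).intervalIntegrable

omit ha hapos

lemma cpl_nonneg {x : ℝ} (hax : 0 < a x) : 0 ≤ cpl a x := by
  unfold cpl; positivity

include ha hapos

lemma int_cpl_mono {x1 : ℝ} (hx1 : x1 ∈ Icc (0:ℝ) 1) :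
    (∫ t in (0:ℝ)..x1, cpl a t) ≤ ∫ t in (0:ℝ)..1, cpl a t := by
  have hsplit : (∫ t in (0:ℝ)..x1, cpl a t) + (∫ t in x1..(1:ℝ), cpl a t)
      = ∫ t in (0:ℝ)..1, cpl a t :=
    intervalIntegral.integral_add_adjacent_intervals
      (cpl_intervalIntegrable ha hapos (by norm_num) hx1)
      (cpl_intervalIntegrable ha hapos hx1 (by norm_num))
  have h2 : 0 ≤ ∫ t in x1..(1:ℝ), cpl a t :=
    intervalIntegral.integral_nonneg hx1.2
      (fun t ht => cpl_nonneg (hapos t ⟨le_trans hx1.1 ht.1, ht.2⟩))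
  linarith

lemma a_one_eq : a 1 = a 0 * Real.exp (∫ x in (0:ℝ)..1, clog a x) := by
  set J : ℝ → ℝ := fun x => ∫ t in (0:ℝ)..x, clog a t with hJ
  set h : ℝ → ℝ := fun x => a x * Real.exp (-(J x)) with hh
  have hJcont : ContinuousOn J (Icc 0 1) := by
    have := intervalIntegral.continuousOn_primitive_interval
      (f := clog a) (μ := volume) (a := (0:ℝ)) (b := (1:ℝ)) ?hint
    · rw [uIcc_of_le (by norm_num : (0:ℝ) ≤ 1)] at this
      exact this
    case hint =>
      rw [uIcc_of_le (by norm_num : (0:ℝ) ≤ 1)]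
      exact (clog_continuousOn ha hapos).integrableOn_Icc
  have hJderiv : ∀ x ∈ Ioo (0:ℝ) 1, HasDerivAt J (clog a x) x := by
    intro x hx
    apply intervalIntegral.integral_hasDerivAt_right
      (clog_intervalIntegrable ha hapos (by norm_num) ⟨hx.1.le, hx.2.le⟩)
      (((clog_continuousOn ha hapos).mono Ioo_subset_Icc_self).stronglyMeasurableAtFilter
        isOpen_Ioo x hx)
      (((clog_continuousOn ha hapos).mono Ioo_subset_Icc_self).continuousAt
        (isOpen_Ioo.mem_nhds hx))
  have hhderiv : ∀ x ∈ Ioo (0:ℝ) 1, HasDerivAt h 0 x := by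
    intro x hx
    have hax : a x ≠ 0 := (hapos x ⟨hx.1.le, hx.2.le⟩).ne'
    have h1 : HasDerivAt a (deriv a x) x := (ha.differentiable one_ne_zero x).hasDerivAt
    have h2 : HasDerivAt (fun y => Real.exp (-(J y))) (Real.exp (-(J x)) * (-(clog a x))) x :=
      (Real.hasDerivAt_exp _).comp x ((hJderiv x hx).neg)
    have h3 := h1.mul h2
    refine h3.congr_deriv ?_
    symm
    rw [clog]
    field_simp
    ring
  have hhcont : ContinuousOn h (Icc 0 1) :=
    ha.continuous.continuousOn.mul (hJcont.neg.rexp)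
  have hmono : MonotoneOn h (Icc 0 1) := by
    apply monotoneOn_of_deriv_nonneg (convex_Icc 0 1) hhcont
    · intro x hx
      rw [interior_Icc] at hx
      exact (hhderiv x hx).differentiableAt.differentiableWithinAt
    · intro x hx
      rw [interior_Icc] at hx
      rw [(hhderiv x hx).deriv]
  have hanti : AntitoneOn h (Icc 0 1) := by
    apply antitoneOn_of_deriv_nonpos (convex_Icc 0 1) hhcont
    · intro x hx
      rw [interior_Icc] at hx
      exact (hhderiv x hx).differentiableAt.differentiableWithinAt
    · intro x hx
      rw [interior_Icc] at hx
      rw [(hhderiv x hx).deriv]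
  have h01 : h 1 = h 0 := le_antisymm
    (hanti (by norm_num : (0:ℝ) ∈ Icc (0:ℝ) 1) (by norm_num) (by norm_num))
    (hmono (by norm_num : (0:ℝ) ∈ Icc (0:ℝ) 1) (by norm_num) (by norm_num))
  have hJ0 : J 0 = 0 := intervalIntegral.integral_same
  rw [hh] at h01
  simp only [hJ0, neg_zero, Real.exp_zero, mul_one] at h01
  have := Real.exp_ne_zero (-(J 1))
  rw [← h01]
  rw [Real.exp_neg]
  field_simp
  rfl

lemma int_split : (∫ x in (0:ℝ)..1, cpl a x)
    = (∫ x in (0:ℝ)..1, clog a x) + ∫ x in (0:ℝ)..1, cmi a x := by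
  rw [← intervalIntegral.integral_add
    (clog_intervalIntegrable ha hapos (by norm_num) (by norm_num))
    (cmi_intervalIntegrable ha hapos (by norm_num) (by norm_num))]
  apply intervalIntegral.integral_congr
  intro x _
  show max (deriv a x) 0 / a x = deriv a x / a x + max (-deriv a x) 0 / a x
  rw [← add_div]
  congr 1
  rcases le_total (deriv a x) 0 with h | h
  · rw [max_eq_right h, max_eq_left (by linarith)]; ring
  · rw [max_eq_left h, max_eq_right (by linarith)]; ring

lemma exp_int_cpl_le_Ca : Real.exp (∫ x in (0:ℝ)..1, cpl a x) ≤ Ca a := by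
  have h0 : 0 < a 0 := hapos 0 (by norm_num)
  have key : (a 1 / a 0) * Real.exp (∫ x in (0:ℝ)..1, max (-deriv a x) 0 / a x)
      = Real.exp (∫ x in (0:ℝ)..1, cpl a x) := by
    have hcm : (∫ x in (0:ℝ)..1, max (-deriv a x) 0 / a x) = ∫ x in (0:ℝ)..1, cmi a x := rfl
    rw [hcm, a_one_eq ha hapos, int_split ha hapos, Real.exp_add]
    field_simp
  rw [← key]
  exact le_max_left _ _

end Cpart


lemma clampN_continuous (n : ℕ) : Continuous (clampN n) :=
  continuous_const.max (continuous_id.min continuous_const)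

lemma phiD_continuous : Continuous phiD := by
  apply continuous_const.div
  · exact (Real.continuous_sqrt.comp (by continuity)).pow 3
  · intro s
    exact pow_ne_zero _ (sqrt1_pos s).ne'

lemma phiND_continuous (n : ℕ) : Continuous (phiND n) :=
  phiD_continuous.comp (clampN_continuous n)

section Dpart

variable {n : ℕ} {a f : ℝ → ℝ} {u0 ubar : ℝ} {u : ℝ → ℝ}

lemma contDiff_one_deriv (hu2 : ContDiff ℝ 2 u) : ContDiff ℝ 1 (deriv u) := by
  have h21 : ContDiff ℝ (1 + 1) u := by
    have : ((1:WithTop ℕ∞) + 1) = 2 := by norm_num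
    rw [this]
    exact hu2
  exact (contDiff_succ_iff_deriv.mp h21).2.2

lemma u_hasDerivAt (hu2 : ContDiff ℝ 2 u) (x : ℝ) : HasDerivAt u (deriv u x) x :=
  ((hu2.differentiable (by norm_num)) x).hasDerivAt

lemma u'_hasDerivAt (hu2 : ContDiff ℝ 2 u) (x : ℝ) :
    HasDerivAt (deriv u) (deriv (deriv u) x) x :=
  (((contDiff_one_deriv hu2).differentiable one_ne_zero) x).hasDerivAt

lemma u''_continuous (hu2 : ContDiff ℝ 2 u) : Continuous (deriv (deriv u)) :=
  (contDiff_one_deriv hu2).continuous_deriv le_rfl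

lemma w_hasDerivAt (hu2 : ContDiff ℝ 2 u) (x : ℝ) :
    HasDerivAt (fun y => phiN n (deriv u y)) (phiND n (deriv u x) * deriv (deriv u) x) x :=
  (phiN_hasDerivAt n (deriv u x)).comp x (u'_hasDerivAt hu2 x)

lemma w_deriv_continuous (hu2 : ContDiff ℝ 2 u) :
    Continuous (deriv (fun y => phiN n (deriv u y))) := by
  have : deriv (fun y => phiN n (deriv u y))
      = fun x => phiND n (deriv u x) * deriv (deriv u) x := by
    funext x
    exact (w_hasDerivAt hu2 x).deriv
  rw [this]
  exact ((phiND_continuous n).comp ((contDiff_one_deriv hu2).continuous)).mul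
    (u''_continuous hu2)

/-- the ODE extends to `x = 1` by continuity. -/
lemma ode_extend (ha : ContDiff ℝ 1 a) (hc : Continuous (fhat f))
    (hsol : IsCauchySol a f n ubar u) :
    ∀ x ∈ Ioc (0:ℝ) 1, -deriv (fun y => phiN n (deriv u y)) x = a x * fhat f (u x) := by
  obtain ⟨hu2, hinit, hd0, hODE⟩ := hsol
  intro x hx
  rcases eq_or_lt_of_le hx.2 with h1 | h1
  · subst h1
    -- continuity argument at 1
    have hne : (𝓝[<] (1:ℝ)).NeBot := inferInstance
    have hmem : Ioo (0:ℝ) 1 ∈ 𝓝[<] (1:ℝ) := Ioo_mem_nhdsLT_of_mem ⟨hx.1, le_rfl⟩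
    have h2 : Tendsto (fun y => -deriv (fun z => phiN n (deriv u z)) y) (𝓝[<] (1:ℝ))
        (𝓝 (-deriv (fun z => phiN n (deriv u z)) 1)) :=
      ((w_deriv_continuous hu2).neg.tendsto 1).mono_left nhdsWithin_le_nhds
    have h3 : Tendsto (fun y => a y * fhat f (u y)) (𝓝[<] (1:ℝ))
        (𝓝 (a 1 * fhat f (u 1))) :=
      ((ha.continuous.mul (hc.comp hu2.continuous)).tendsto 1).mono_left nhdsWithin_le_nhds
    have heq : (fun y => -deriv (fun z => phiN n (deriv u z)) y) =ᶠ[𝓝[<] (1:ℝ)]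
        (fun y => a y * fhat f (u y)) := by
      filter_upwards [hmem] with y hy
      exact hODE y hy
    exact tendsto_nhds_unique (h2.congr' heq) h3
  · exact hODE x ⟨hx.1, h1⟩

end Dpart


section Dpart2

variable {n : ℕ} {a f : ℝ → ℝ} {u0 ubar : ℝ} {u : ℝ → ℝ}

lemma energy_estimate
    (ha : ContDiff ℝ 1 a) (hapos : ∀ x ∈ Icc (0:ℝ) 1, 0 < a x)
    (hf : ContDiffOn ℝ 1 f (Ici 0)) (hu0 : 0 < u0)
    (hfeq : Feq f u0) (hfsgn : Fsgn f u0)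
    (hap : Fap a f u0 ubar)
    (hsol : IsCauchySol a f n ubar u)
    {x1 : ℝ} (hx1 : x1 ∈ Ioc (0:ℝ) 1) (hdx1 : deriv u x1 = 0) :
    Fh f u0 0 ≤ Fh f u0 (u x1) := by
  obtain ⟨hu2, hinit, hd0, hODE⟩ := hsol
  have hc : Continuous (fhat f) := fhat_continuous hf.continuousOn hfeq.1
  set F := Fh f u0 with hF
  set P : ℝ → ℝ := fun x => Psi n (deriv u x) with hP
  set mE : ℝ → ℝ := fun x => P x / a x + F (u x) with hmE
  set W : ℝ → ℝ := fun x => Real.exp (∫ t in (0:ℝ)..x, cpl a t) with hW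
  have hwODE : ∀ x ∈ Ioo (0:ℝ) 1, phiND n (deriv u x) * deriv (deriv u) x
      = -(a x * fhat f (u x)) := by
    intro x hx
    have h1 := hODE x hx
    have h2 := (w_hasDerivAt (n := n) hu2 x).deriv
    rw [h2] at h1
    linarith
  have hmEd : ∀ x ∈ Ioo (0:ℝ) 1, HasDerivAt mE (-(P x * deriv a x) / a x ^ 2) x := by
    intro x hx
    have hax : a x ≠ 0 := (hapos x ⟨hx.1.le, hx.2.le⟩).ne'
    have hPd : HasDerivAt (fun y => Psi n (deriv u y))
        (deriv u x * phiND n (deriv u x) * deriv (deriv u) x) x := by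
      exact (Psi_hasDerivAt n (deriv u x)).comp x (u'_hasDerivAt hu2 x)
    have had : HasDerivAt a (deriv a x) x := ((ha.differentiable one_ne_zero) x).hasDerivAt
    have hdiv : HasDerivAt (fun y => P y / a y)
        ((deriv u x * phiND n (deriv u x) * deriv (deriv u) x * a x - P x * deriv a x)
          / a x ^ 2) x := hPd.div had hax
    have hFd : HasDerivAt (fun y => F (u y)) (fhat f (u x) * deriv u x) x :=
      (Fh_hasDerivAt hc (u x)).comp x (u_hasDerivAt hu2 x)
    have hsum := hdiv.add hFd
    have : HasDerivAt mE ((deriv u x * phiND n (deriv u x) * deriv (deriv u) x * a x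
        - P x * deriv a x) / a x ^ 2 + fhat f (u x) * deriv u x) x := hsum
    convert this using 1
    rw [mul_assoc (deriv u x), hwODE x hx]
    field_simp
    ring
  have hWpos : ∀ x, 0 < W x := fun x => Real.exp_pos _
  have hWd : ∀ x ∈ Ioo (0:ℝ) 1, HasDerivAt W (cpl a x * W x) x := by
    intro x hx
    have hI : HasDerivAt (fun y => ∫ t in (0:ℝ)..y, cpl a t) (cpl a x) x := by
      apply intervalIntegral.integral_hasDerivAt_right
        (cpl_intervalIntegrable ha hapos (by norm_num) ⟨hx.1.le, hx.2.le⟩)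
        (((cpl_continuousOn ha hapos).mono Ioo_subset_Icc_self).stronglyMeasurableAtFilter
          isOpen_Ioo x hx)
        (((cpl_continuousOn ha hapos).mono Ioo_subset_Icc_self).continuousAt
          (isOpen_Ioo.mem_nhds hx))
    have := (Real.hasDerivAt_exp _).comp x hI
    refine this.congr_deriv ?_
    ring
  set g : ℝ → ℝ := fun x => mE x * W x with hg
  have hgd : ∀ x ∈ Ioo (0:ℝ) 1, HasDerivAt g
      ((-(P x * deriv a x) / a x ^ 2) * W x + mE x * (cpl a x * W x)) x :=
    fun x hx => (hmEd x hx).mul (hWd x hx)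
  have hgd_nonneg : ∀ x ∈ Ioo (0:ℝ) 1,
      0 ≤ (-(P x * deriv a x) / a x ^ 2) * W x + mE x * (cpl a x * W x) := by
    intro x hx
    have hax : 0 < a x := hapos x ⟨hx.1.le, hx.2.le⟩
    have hPx : 0 ≤ P x := Psi_nonneg n _
    have hFx : 0 ≤ F (u x) := Fh_nonneg hc hfeq hfsgn hu0 _
    have hM1 : deriv a x ≤ max (deriv a x) 0 := le_max_left _ _
    have hM0 : (0:ℝ) ≤ max (deriv a x) 0 := le_max_right _ _
    have hWx := (hWpos x).le
    have key : (-(P x * deriv a x) / a x ^ 2) + mE x * cpl a x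
        = (P x * (max (deriv a x) 0 - deriv a x) + F (u x) * max (deriv a x) 0 * a x)
          / a x ^ 2 := by
      rw [hmE]
      show -(P x * deriv a x) / a x ^ 2 + (P x / a x + F (u x)) * (max (deriv a x) 0 / a x) = _
      field_simp
      ring
    have h1 : 0 ≤ (P x * (max (deriv a x) 0 - deriv a x)
        + F (u x) * max (deriv a x) 0 * a x) / a x ^ 2 := by
      apply div_nonneg _ (sq_nonneg _)
      have e1 := mul_nonneg hPx (by linarith : (0:ℝ) ≤ max (deriv a x) 0 - deriv a x)
      have e2 := mul_nonneg (mul_nonneg hFx hM0) hax.le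
      linarith
    have e3 : (-(P x * deriv a x) / a x ^ 2) * W x + mE x * (cpl a x * W x)
        = ((-(P x * deriv a x) / a x ^ 2) + mE x * cpl a x) * W x := by ring
    rw [e3, key]
    exact mul_nonneg h1 hWx
  have hIcc : Icc (0:ℝ) x1 ⊆ Icc (0:ℝ) 1 := Icc_subset_Icc le_rfl hx1.2
  have hIoo : Ioo (0:ℝ) x1 ⊆ Ioo (0:ℝ) 1 := Ioo_subset_Ioo le_rfl hx1.2
  have hprim : ContinuousOn (fun x => ∫ t in (0:ℝ)..x, cpl a t) (Icc 0 1) := by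
    have := intervalIntegral.continuousOn_primitive_interval
      (f := cpl a) (μ := volume) (a := (0:ℝ)) (b := (1:ℝ)) ?hint
    · rw [uIcc_of_le (by norm_num : (0:ℝ) ≤ 1)] at this
      exact this
    case hint =>
      rw [uIcc_of_le (by norm_num : (0:ℝ) ≤ 1)]
      exact (cpl_continuousOn ha hapos).integrableOn_Icc
  have hgcont : ContinuousOn g (Icc 0 1) := by
    apply ContinuousOn.mul
    · apply ContinuousOn.add
      · exact (((Psi_continuous n).comp (contDiff_one_deriv hu2).continuous).continuousOn).div
          ha.continuous.continuousOn (fun x hx => (hapos x hx).ne')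
      · exact ((Fh_continuous hc).comp hu2.continuous).continuousOn
    · exact Real.continuous_exp.comp_continuousOn hprim
  have hmono : MonotoneOn g (Icc 0 x1) := by
    apply monotoneOn_of_deriv_nonneg (convex_Icc _ _) (hgcont.mono hIcc)
    · intro x hx
      rw [interior_Icc] at hx
      exact (hgd x (hIoo hx)).differentiableAt.differentiableWithinAt
    · intro x hx
      rw [interior_Icc] at hx
      rw [(hgd x (hIoo hx)).deriv]
      exact hgd_nonneg x (hIoo hx)
  have h01 : g 0 ≤ g x1 :=
    hmono (left_mem_Icc.2 hx1.1.le) (right_mem_Icc.2 hx1.1.le) hx1.1.le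
  have hP0 : P 0 = 0 := by
    show Psi n (deriv u 0) = 0
    rw [hd0, Psi_zero]
  have hPx1 : P x1 = 0 := by
    show Psi n (deriv u x1) = 0
    rw [hdx1, Psi_zero]
  have hW0 : W 0 = 1 := by
    show Real.exp (∫ t in (0:ℝ)..(0:ℝ), cpl a t) = 1
    rw [intervalIntegral.integral_same, Real.exp_zero]
  have hbar : F ubar = Ca a * F 0 := by
    have h1 : F ubar = ∫ s in u0..ubar, f s := by
      apply intervalIntegral.integral_congr
      intro t ht
      rw [uIcc_of_le hap.1.le] at ht
      unfold fhat
      rw [if_neg (not_lt.2 (by linarith [ht.1] : (0:ℝ) ≤ t))]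
    have h2 : F 0 = ∫ s in u0..(0:ℝ), f s := by
      apply intervalIntegral.integral_congr
      intro t ht
      rw [uIcc_comm, uIcc_of_le hu0.le] at ht
      unfold fhat
      rw [if_neg (not_lt.2 ht.1)]
    rw [h1, h2]
    exact hap.2
  have hg0 : g 0 = Ca a * F 0 := by
    have e1 : g 0 = (P 0 / a 0 + F (u 0)) * W 0 := rfl
    rw [e1, hP0, hW0, hinit, hbar, zero_div]
    ring
  have hgx1 : g x1 = F (u x1) * W x1 := by
    have e1 : g x1 = (P x1 / a x1 + F (u x1)) * W x1 := rfl
    rw [e1, hPx1, zero_div, zero_add]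
  rw [hg0, hgx1] at h01
  have hE1 : W x1 ≤ Real.exp (∫ t in (0:ℝ)..1, cpl a t) :=
    Real.exp_le_exp.2 (int_cpl_mono ha hapos ⟨hx1.1.le, hx1.2⟩)
  have hCa : Real.exp (∫ t in (0:ℝ)..1, cpl a t) ≤ Ca a := exp_int_cpl_le_Ca ha hapos
  have hF0 : 0 < F 0 := Fh_zero_pos hc hfeq hfsgn hu0
  have hFx1 : 0 ≤ F (u x1) := Fh_nonneg hc hfeq hfsgn hu0 _
  have hCapos : 0 < Ca a := lt_of_lt_of_le (Real.exp_pos _) hCa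
  have hq : F (u x1) * W x1 ≤ F (u x1) * Ca a :=
    mul_le_mul_of_nonneg_left (hE1.trans hCa) hFx1
  nlinarith

end Dpart2


section Dpart3

variable {n : ℕ} {a f : ℝ → ℝ} {u0 ubar : ℝ} {u : ℝ → ℝ}

lemma neg_flat
    (hapos : ∀ x ∈ Icc (0:ℝ) 1, 0 < a x)
    (hu0 : 0 < u0) (hfeq : Feq f u0) (hap : Fap a f u0 ubar)
    (hsol : IsCauchySol a f n ubar u)
    {x1 : ℝ} (hx1 : x1 ∈ Ioc (0:ℝ) 1) (hdx1 : deriv u x1 = 0) (hneg : u x1 ≤ 0) :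
    u x1 = 0 := by
  by_contra hne
  have hlt : u x1 < 0 := lt_of_le_of_ne hneg hne
  obtain ⟨hu2, hinit, hd0, hODE⟩ := hsol
  have hub0 : 0 < ubar := lt_trans hu0 hap.1
  set S := {x ∈ Icc (0:ℝ) x1 | 0 ≤ u x} with hS
  have hSne : S.Nonempty := ⟨0, ⟨⟨le_rfl, hx1.1.le⟩, by rw [hinit]; exact hub0.le⟩⟩
  have hSbdd : BddAbove S := ⟨x1, fun x hx => hx.1.2⟩
  have hSclosed : IsClosed S := by
    have : S = Icc 0 x1 ∩ {x | 0 ≤ u x} := rfl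
    rw [this]
    exact isClosed_Icc.inter (isClosed_le continuous_const hu2.continuous)
  set x3 := sSup S with hx3
  have hx3S : x3 ∈ S := hSclosed.csSup_mem hSne hSbdd
  have hx3le : x3 ≤ x1 := hx3S.1.2
  have h0x3 : 0 ≤ x3 := hx3S.1.1
  have hux3 : 0 ≤ u x3 := hx3S.2
  have hx3lt : x3 < x1 := by
    rcases eq_or_lt_of_le hx3le with h | h
    · exfalso; rw [h] at hux3; linarith
    · exact h
  have hgt : ∀ x, x3 < x → x ≤ x1 → u x < 0 := by
    intro x hgtx hlex
    by_contra hge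
    push_neg at hge
    have hxS : x ∈ S := ⟨⟨le_trans h0x3 hgtx.le, hlex⟩, hge⟩
    have := le_csSup hSbdd hxS
    linarith
  set w : ℝ → ℝ := fun x => phiN n (deriv u x) with hwdef
  have hwd : ∀ x, HasDerivAt w (phiND n (deriv u x) * deriv (deriv u) x) x :=
    fun x => w_hasDerivAt hu2 x
  have hwderiv0 : ∀ x ∈ Ioo x3 x1, deriv w x = 0 := by
    intro x hx
    have hxI : x ∈ Ioo (0:ℝ) 1 := ⟨lt_of_le_of_lt h0x3 hx.1, lt_of_lt_of_le hx.2 hx1.2⟩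
    have h1 := hODE x hxI
    have hf0 : fhat f (u x) = 0 := fhat_zero_of_nonpos hfeq.1 (hgt x hx.1 hx.2.le).le
    rw [hf0, mul_zero] at h1
    linarith
  have hwcont : Continuous w := (phiN_continuous n).comp (contDiff_one_deriv hu2).continuous
  have hwdiffOn : DifferentiableOn ℝ w (interior (Icc x3 x1)) :=
    fun x _ => (hwd x).differentiableAt.differentiableWithinAt
  have hwmono : MonotoneOn w (Icc x3 x1) := by
    apply monotoneOn_of_deriv_nonneg (convex_Icc _ _) hwcont.continuousOn hwdiffOn
    intro x hx
    rw [interior_Icc] at hx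
    rw [hwderiv0 x hx]
  have hwanti : AntitoneOn w (Icc x3 x1) := by
    apply antitoneOn_of_deriv_nonpos (convex_Icc _ _) hwcont.continuousOn hwdiffOn
    intro x hx
    rw [interior_Icc] at hx
    rw [hwderiv0 x hx]
  have hwx1 : w x1 = 0 := by
    show phiN n (deriv u x1) = 0
    rw [hdx1, phiN_zero_val]
  have hwzero : ∀ x ∈ Icc x3 x1, w x = 0 := by
    intro x hx
    have h1 : w x ≤ w x1 := hwmono hx (right_mem_Icc.2 hx3le) hx.2
    have h2 : w x1 ≤ w x := hwanti hx (right_mem_Icc.2 hx3le) hx.2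
    rw [hwx1] at h1 h2
    linarith
  have hdzero : ∀ x ∈ Ioo x3 x1, deriv u x = 0 := by
    intro x hx
    exact phiN_eq_zero_iff.1 (hwzero x (Ioo_subset_Icc_self hx))
  have hudiffOn : DifferentiableOn ℝ u (interior (Icc x3 x1)) :=
    fun x _ => (u_hasDerivAt hu2 x).differentiableAt.differentiableWithinAt
  have humono : MonotoneOn u (Icc x3 x1) := by
    apply monotoneOn_of_deriv_nonneg (convex_Icc _ _) hu2.continuous.continuousOn hudiffOn
    intro x hx
    rw [interior_Icc] at hx
    rw [hdzero x hx]
  have := humono (left_mem_Icc.2 hx3le) (right_mem_Icc.2 hx3le) hx3le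
  linarith

lemma no_touch_zero
    (ha : ContDiff ℝ 1 a) (hapos : ∀ x ∈ Icc (0:ℝ) 1, 0 < a x)
    (hf : ContDiffOn ℝ 1 f (Ici 0)) (hu0 : 0 < u0)
    (hfeq : Feq f u0) (hap : Fap a f u0 ubar)
    (hsol : IsCauchySol a f n ubar u)
    {x1 : ℝ} (hx1 : x1 ∈ Ioc (0:ℝ) 1) (hux1 : u x1 = 0) (hdx1 : deriv u x1 = 0) :
    False := by
  have hc : Continuous (fhat f) := fhat_continuous hf.continuousOn hfeq.1
  have hODEc := ode_extend ha hc hsol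
  obtain ⟨hu2, hinit, hd0, hODE⟩ := hsol
  have hub0 : 0 < ubar := lt_trans hu0 hap.1
  set w : ℝ → ℝ := fun x => phiN n (deriv u x) with hwdef
  have hwd : ∀ x, HasDerivAt w (phiND n (deriv u x) * deriv (deriv u) x) x :=
    fun x => w_hasDerivAt hu2 x
  set B := {x ∈ Icc (0:ℝ) x1 | u x = 0 ∧ deriv u x = 0} with hB
  have hBne : B.Nonempty := ⟨x1, ⟨right_mem_Icc.2 hx1.1.le, hux1, hdx1⟩⟩
  have hBclosed : IsClosed B := by
    have : B = Icc 0 x1 ∩ (u ⁻¹' {0} ∩ deriv u ⁻¹' {0}) := by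
      ext x
      simp only [hB, mem_inter_iff, mem_setOf_eq, mem_preimage, mem_singleton_iff]
      try tauto
    rw [this]
    exact isClosed_Icc.inter ((isClosed_singleton.preimage hu2.continuous).inter
      (isClosed_singleton.preimage (contDiff_one_deriv hu2).continuous))
  have hBbdd : BddBelow B := ⟨0, fun x hx => hx.1.1⟩
  set m := sInf B with hm
  have hmB : m ∈ B := hBclosed.csInf_mem hBne hBbdd
  have hum : u m = 0 := hmB.2.1
  have hdm : deriv u m = 0 := hmB.2.2
  have hmx1 : m ≤ x1 := hmB.1.2
  have hm0 : 0 < m := by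
    rcases eq_or_lt_of_le hmB.1.1 with h | h
    · exfalso
      rw [← h] at hum
      rw [hinit] at hum
      linarith
    · exact h
  -- Lipschitz bound for f near 0
  obtain ⟨K, t, ht, hlip⟩ := (hf 0 (mem_Ici.2 le_rfl)).exists_lipschitzOnWith (convex_Ici 0)
  obtain ⟨δ1, hδ1, hδsub⟩ : ∃ δ1 > 0, Icc (0:ℝ) δ1 ⊆ t := by
    rcases Metric.mem_nhdsWithin_iff.1 ht with ⟨ε, hε, hsub⟩
    refine ⟨ε/2, by linarith, fun p hp => hsub ⟨?_, hp.1⟩⟩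
    rw [Metric.mem_ball, Real.dist_eq, sub_zero, abs_of_nonneg hp.1]
    linarith [hp.2]
  set δ := min δ1 1 with hδdef
  have hδpos : 0 < δ := lt_min hδ1 one_pos
  have hfK : ∀ p : ℝ, |p| ≤ δ → |fhat f p| ≤ (K:ℝ) * |p| := by
    intro p hp
    rcases lt_or_ge p 0 with h | h
    · simp only [fhat, if_pos h, abs_zero]
      positivity
    · simp only [fhat, if_neg (not_lt.2 h)]
      have hp1 : p ∈ t := hδsub ⟨h, by
        rw [abs_of_nonneg h] at hp
        exact hp.trans (min_le_left _ _)⟩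
      have h0t : (0:ℝ) ∈ t := hδsub ⟨le_rfl, hδ1.le⟩
      have hd := hlip.dist_le_mul p hp1 0 h0t
      rw [Real.dist_eq, Real.dist_eq, sub_zero, hfeq.1, sub_zero] at hd
      exact hd
  -- bound for a
  obtain ⟨C, hC⟩ := (isCompact_Icc :
    IsCompact (Icc (0:ℝ) 1)).exists_bound_of_continuousOn ha.continuous.continuousOn
  have hC0 : 0 ≤ C := le_trans (norm_nonneg _) (hC 0 ⟨le_rfl, zero_le_one⟩)
  set K2 : ℝ := max (Real.sqrt 2) (C * K) with hK2
  have hK2a : Real.sqrt 2 ≤ K2 := le_max_left _ _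
  have hK2b : C * K ≤ K2 := le_max_right _ _
  -- smallness neighborhood
  have hev : ∀ᶠ s in 𝓝 m, |u s| ≤ δ ∧ |deriv u s| ≤ 1 := by
    have h1 : ∀ᶠ s in 𝓝 m, u s ∈ Ioo (-δ) δ :=
      hu2.continuous.continuousAt (Ioo_mem_nhds (by rw [hum]; linarith) (by rw [hum]; exact hδpos))
    have h2 : ∀ᶠ s in 𝓝 m, deriv u s ∈ Ioo (-1 : ℝ) 1 :=
      (contDiff_one_deriv hu2).continuous.continuousAt
        (Ioo_mem_nhds (by rw [hdm]; norm_num) (by rw [hdm]; norm_num))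
    filter_upwards [h1, h2] with s hs1 hs2
    exact ⟨abs_le.2 ⟨hs1.1.le, hs1.2.le⟩, abs_le.2 ⟨hs2.1.le, hs2.2.le⟩⟩
  obtain ⟨ε0, hε0, hball⟩ := Metric.eventually_nhds_iff.1 hev
  set ε := min (ε0/2) (m/2) with hεdef
  have hεpos : 0 < ε := lt_min (by linarith) (by linarith)
  have hεm : ε ≤ m/2 := min_le_right _ _
  have hsmall : ∀ s ∈ Icc (m - ε) m, |u s| ≤ δ ∧ |deriv u s| ≤ 1 := by
    intro s hs
    apply hball
    rw [Real.dist_eq, abs_sub_lt_iff]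
    constructor
    · linarith [hs.2, hε0]
    · have := min_le_left (ε0/2) (m/2)
      have h1 : m - ε ≤ s := hs.1
      linarith
  -- Gronwall setup
  set z : ℝ → ℝ × ℝ := fun s => (u (m - s), w (m - s)) with hzdef
  set z' : ℝ → ℝ × ℝ :=
    fun s => (-(deriv u (m - s)), a (m - s) * fhat f (u (m - s))) with hz'def
  have hODE_at : ∀ s ∈ Ioc (0:ℝ) 1, deriv w s = -(a s * fhat f (u s)) := by
    intro s hs
    have := hODEc s hs
    linarith
  have hzderiv : ∀ s ∈ Ico (0:ℝ) ε, HasDerivWithinAt z (z' s) (Ici s) s := by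
    intro s hsI
    have hmt : m - s ∈ Ioc (0:ℝ) 1 := by
      constructor
      · have := hsI.2
        linarith
      · have := hsI.1
        linarith [hmx1, hx1.2]
    have hyd : HasDerivAt (fun x => (u x, w x))
        (deriv u (m - s), phiND n (deriv u (m - s)) * deriv (deriv u) (m - s)) (m - s) :=
      (u_hasDerivAt hu2 (m - s)).prodMk (hwd (m - s))
    have hneg : HasDerivAt (fun r : ℝ => m - r) (-1 : ℝ) s := by
      simpa using (hasDerivAt_id s).const_sub m
    have hcomp := hyd.scomp s hneg
    have hval : phiND n (deriv u (m - s)) * deriv (deriv u) (m - s)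
        = -(a (m - s) * fhat f (u (m - s))) := by
      rw [← (hwd (m - s)).deriv]
      exact hODE_at (m - s) hmt
    have : HasDerivAt z (z' s) s := by
      refine hcomp.congr_deriv ?_
      symm
      show (-(deriv u (m - s)), a (m - s) * fhat f (u (m - s))) = _
      rw [Prod.smul_mk, hval, smul_eq_mul, smul_eq_mul]
      norm_num
    exact this.hasDerivWithinAt
  have hwcont : Continuous w := (phiN_continuous n).comp (contDiff_one_deriv hu2).continuous
  have hzcont : ContinuousOn z (Icc 0 ε) := by
    apply ContinuousOn.prodMk
    · exact (hu2.continuous.comp (continuous_const.sub continuous_id)).continuousOn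
    · exact (hwcont.comp (continuous_const.sub continuous_id)).continuousOn
  have hz0 : ‖z 0‖ ≤ 0 := by
    have hz00 : z 0 = (0, 0) := by
      show (u (m - 0), w (m - 0)) = (0, 0)
      rw [sub_zero]
      have hwm : w m = 0 := by
        show phiN n (deriv u m) = 0
        rw [hdm, phiN_zero_val]
      rw [hum, hwm]
    rw [hz00]
    simp
  have hbound : ∀ s ∈ Ico (0:ℝ) ε, ‖z' s‖ ≤ K2 * ‖z s‖ + 0 := by
    intro s hsI
    have hsmem : m - s ∈ Icc (m - ε) m := ⟨by linarith [hsI.2], by linarith [hsI.1]⟩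
    obtain ⟨hsu, hsu'⟩ := hsmall _ hsmem
    have hzn : ‖z s‖ = max |u (m - s)| |w (m - s)| := by
      rw [Prod.norm_def, Real.norm_eq_abs, Real.norm_eq_abs]
    have hz'n : ‖z' s‖ = max |(-(deriv u (m - s)))| |a (m - s) * fhat f (u (m - s))| := by
      rw [Prod.norm_def, Real.norm_eq_abs, Real.norm_eq_abs]
    have hznn : 0 ≤ ‖z s‖ := norm_nonneg _
    have hsqrt2 : (0:ℝ) ≤ Real.sqrt 2 := Real.sqrt_nonneg 2
    -- first component
    have hc1 : |(-(deriv u (m - s)))| ≤ K2 * ‖z s‖ := by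
      rw [abs_neg]
      calc |deriv u (m - s)| ≤ Real.sqrt 2 * |w (m - s)| :=
            abs_le_sqrt_two_mul_abs_phiN n hsu'
        _ ≤ Real.sqrt 2 * ‖z s‖ := by
            apply mul_le_mul_of_nonneg_left _ hsqrt2
            rw [hzn]
            exact le_max_right _ _
        _ ≤ K2 * ‖z s‖ := mul_le_mul_of_nonneg_right hK2a hznn
    -- second component
    have hc2 : |a (m - s) * fhat f (u (m - s))| ≤ K2 * ‖z s‖ := by
      have hms1 : m - s ∈ Icc (0:ℝ) 1 := by
        constructor
        · have := hsI.2; linarith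
        · have := hsI.1; linarith [hmx1, hx1.2]
      calc |a (m - s) * fhat f (u (m - s))|
          = ‖a (m - s)‖ * |fhat f (u (m - s))| := by
            rw [abs_mul, Real.norm_eq_abs]
        _ ≤ C * ((K:ℝ) * |u (m - s)|) := by
            apply mul_le_mul (hC _ hms1) (hfK _ hsu) (abs_nonneg _) hC0
        _ = C * (K:ℝ) * |u (m - s)| := by ring
        _ ≤ C * (K:ℝ) * ‖z s‖ := by
            apply mul_le_mul_of_nonneg_left _ (by positivity)
            rw [hzn]
            exact le_max_left _ _
        _ ≤ K2 * ‖z s‖ := mul_le_mul_of_nonneg_right hK2b hznn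
    rw [hz'n, add_zero]
    exact max_le hc1 hc2
  have hgron := norm_le_gronwallBound_of_norm_deriv_right_le hzcont hzderiv hz0 hbound
  have hzε : ‖z ε‖ ≤ 0 := by
    have := hgron ε (right_mem_Icc.2 hεpos.le)
    rwa [sub_zero, gronwallBound_ε0_δ0] at this
  have hzz : z ε = 0 := norm_le_zero_iff.1 hzε
  have hu' : u (m - ε) = 0 := by
    have := congrArg Prod.fst hzz
    simpa using this
  have hw' : phiN n (deriv u (m - ε)) = 0 := by
    have := congrArg Prod.snd hzz
    simpa using this
  have hd' : deriv u (m - ε) = 0 := phiN_eq_zero_iff.1 hw'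
  have hmem : m - ε ∈ B := ⟨⟨by linarith, by linarith⟩, hu', hd'⟩
  have := csInf_le hBbdd hmem
  linarith

end Dpart3


section Final

variable {n : ℕ} {a f : ℝ → ℝ} {u0 ubar : ℝ} {u : ℝ → ℝ}

lemma key_no_return
    (ha : ContDiff ℝ 1 a) (hapos : ∀ x ∈ Icc (0:ℝ) 1, 0 < a x)
    (hf : ContDiffOn ℝ 1 f (Ici 0)) (hu0 : 0 < u0)
    (hfeq : Feq f u0) (hfsgn : Fsgn f u0) (hap : Fap a f u0 ubar)
    (hsol : IsCauchySol a f n ubar u)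
    {x1 : ℝ} (hx1 : x1 ∈ Ioc (0:ℝ) 1) (hdx1 : deriv u x1 = 0) : u0 < u x1 := by
  by_contra hle
  push_neg at hle
  have hc : Continuous (fhat f) := fhat_continuous hf.continuousOn hfeq.1
  have hen := energy_estimate ha hapos hf hu0 hfeq hfsgn hap hsol hx1 hdx1
  have hneg : u x1 ≤ 0 := by
    by_contra hpos
    push_neg at hpos
    have := Fh_lt_of_pos hc hfeq hfsgn hu0 hpos hle
    linarith
  have h0 : u x1 = 0 := neg_flat hapos hu0 hfeq hap hsol hx1 hdx1 hneg
  exact no_touch_zero ha hapos hf hu0 hfeq hap hsol hx1 h0 hdx1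

end Final

theorem statement8 (n : ℕ) (a f : ℝ → ℝ) (u0 : ℝ)
    (ha : ContDiff ℝ 1 a) (hapos : ∀ x ∈ Icc (0:ℝ) 1, 0 < a x)
    (hf : ContDiffOn ℝ 1 f (Ici 0)) (hu0 : 0 < u0)
    (hfeq : Feq f u0) (hfsgn : Fsgn f u0)
    (ubar : ℝ) (hap : Fap a f u0 ubar) :
    ∀ u θ : ℝ → ℝ, IsCauchySol a f n ubar u → IsAngle n u0 u θ →
      θ 0 = 0 → θ 1 - θ 0 < Real.pi := by
  intro u θ hsol hang hθ0
  by_contra hge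
  push_neg at hge
  rw [hθ0, sub_zero] at hge
  obtain ⟨hθcont, hpolar⟩ := hang
  have hπ : Real.pi ∈ Icc (θ 0) (θ 1) := by
    rw [hθ0]
    exact ⟨Real.pi_pos.le, hge⟩
  obtain ⟨x1, hx1I, hx1θ⟩ := intermediate_value_Icc zero_le_one hθcont hπ
  have hx1pos : 0 < x1 := by
    rcases eq_or_lt_of_le hx1I.1 with h | h
    · exfalso
      rw [← h, hθ0] at hx1θ
      exact Real.pi_ne_zero hx1θ.symm
    · exact h
  obtain ⟨hcos, hsin⟩ := hpolar x1 ⟨hx1I.1, hx1I.2⟩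
  rw [hx1θ, Real.sin_pi] at hsin
  rw [hx1θ, Real.cos_pi] at hcos
  have hw0 : phiN n (deriv u x1) = 0 := by
    rw [hsin]
    ring
  have hd : deriv u x1 = 0 := phiN_eq_zero_iff.1 hw0
  have hle : u x1 ≤ u0 := by
    have hsq : 0 ≤ Real.sqrt ((u x1 - u0) ^ 2 + phiN n (deriv u x1) ^ 2) := Real.sqrt_nonneg _
    nlinarith [hcos]
  have := key_no_return ha hapos hf hu0 hfeq hfsgn hap hsol ⟨hx1pos, hx1I.2⟩ hd
  linarith
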